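/- Let n ≥ 1, h > 0, M ≥ 0, b > 0 and θ ∈ ℝ. Suppose φ : ℝ → ℝ is (n−1)-times continuously differentiable on [θ, θ + n·h] with its (n−1)-st derivative differentiable on (θ, θ + n·h), and |φ^{(n)}(ξ)| ≤ M · b^n for all ξ ∈ (θ, θ + n·h). Then |∑_{k=0}^{n} (−1)^k · C(n,k) · φ(θ + k·h)| ≤ (M / √(2πn)) · (2·h·b·e)^n. -/

import Mathlib

/-!
Expand `φ` around `θ` by its Taylor polynomial `T` of degree `n - 1`. The alternating binomial
sum is `(-1)ⁿ` times the `n`-th forward difference, which annihilates `T`; on each node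
`θ + k h` the Lagrange remainder is at most `M bⁿ (n h)ⁿ / n!`, and the binomial coefficients sum
to `2ⁿ`. Stirling's lower bound `√(2πn) (n/e)ⁿ ≤ n!` converts `nⁿ / n!` into `eⁿ / √(2πn)`.
-/

open Set Real Finset Filter Topology

theorem iteratedDerivWithin_Icc_eq_of_lt {f : ℝ → ℝ} {a b c y : ℝ} (hy : y < b) (hbc : b ≤ c)
    (n : ℕ) : iteratedDerivWithin n f (Icc a b) y = iteratedDerivWithin n f (Icc a c) y := by
  have hset : (Icc a b : Set ℝ) =ᶠ[𝓝 y] Icc a c := by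
    refine eventuallyEq_set.2 ?_
    filter_upwards [Iio_mem_nhds hy] with z hz
    exact ⟨fun hz' => ⟨hz'.1, hz'.2.trans hbc⟩, fun hz' => ⟨hz'.1, (mem_Iio.1 hz).le⟩⟩
  simp only [iteratedDerivWithin_eq_iteratedFDerivWithin, iteratedFDerivWithin_congr_set hset]

theorem taylorWithinEval_Icc_eq_of_lt {f : ℝ → ℝ} {a b c : ℝ} (hab : a < b) (hbc : b ≤ c)
    (n : ℕ) (x : ℝ) : taylorWithinEval f n (Icc a b) a x = taylorWithinEval f n (Icc a c) a x := by
  simp only [taylor_within_apply, iteratedDerivWithin_Icc_eq_of_lt hab hbc]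

theorem exists_taylor_mean_remainder_lagrange_Icc {f : ℝ → ℝ} {a b x : ℝ} {n : ℕ}
    (hx : x ∈ Ioc a b) (hf : ContDiffOn ℝ n f (Icc a b))
    (hf' : DifferentiableOn ℝ (iteratedDerivWithin n f (Icc a b)) (Ioo a b)) :
    ∃ x' ∈ Ioo a x, f x - taylorWithinEval f n (Icc a b) a x =
      iteratedDerivWithin (n + 1) f (Icc a b) x' * (x - a) ^ (n + 1) / (n + 1).factorial := by
  obtain ⟨hax, hxb⟩ := hx
  have hsub : Icc a x ⊆ Icc a b := Icc_subset_Icc_right hxb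
  have hf'x : DifferentiableOn ℝ (iteratedDerivWithin n f (Icc a x)) (Ioo a x) :=
    (hf'.mono (Ioo_subset_Ioo_right hxb)).congr fun y hy =>
      iteratedDerivWithin_Icc_eq_of_lt hy.2 hxb n
  obtain ⟨x', hx', heq⟩ := taylor_mean_remainder_lagrange hax.ne
    (by rw [uIcc_of_le hax.le]; exact hf.mono hsub)
    (by rwa [uIcc_of_le hax.le, uIoo_of_le hax.le])
  rw [uIoo_of_le hax.le] at hx'
  rw [uIcc_of_le hax.le, taylorWithinEval_Icc_eq_of_lt hax hxb,
    iteratedDerivWithin_Icc_eq_of_lt hx'.2 hxb] at heq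
  exact ⟨x', hx', heq⟩

theorem abs_sub_taylorWithinEval_Icc_le {f : ℝ → ℝ} {a b x C : ℝ} {n : ℕ} (hx : x ∈ Icc a b)
    (hf : ContDiffOn ℝ n f (Icc a b))
    (hf' : DifferentiableOn ℝ (iteratedDerivWithin n f (Icc a b)) (Ioo a b))
    (hC : ∀ y ∈ Ioo a b, |iteratedDerivWithin (n + 1) f (Icc a b) y| ≤ C) :
    |f x - taylorWithinEval f n (Icc a b) a x| ≤ C * (x - a) ^ (n + 1) / (n + 1).factorial := by
  obtain rfl | hax := hx.1.eq_or_lt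
  · simp [taylorWithinEval_self]
  obtain ⟨x', hx', heq⟩ := exists_taylor_mean_remainder_lagrange_Icc ⟨hax, hx.2⟩ hf hf'
  have hC' := hC x' (Ioo_subset_Ioo_right hx.2 hx')
  rw [heq, abs_div, abs_mul, abs_of_nonneg (pow_nonneg (sub_nonneg.2 hax.le) _), Nat.abs_cast]
  gcongr

theorem sum_range_alternating_choose_mul_poly_eq_zero {R : Type*} [CommRing R] (n : ℕ)
    (c : ℕ → R) :
    ∑ k ∈ range (n + 1), (-1) ^ k * (n.choose k : R) * ∑ i ∈ range n, c i * (k : R) ^ i = 0 := by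
  -- the sum is `(-1) ^ n` times the `n`-th forward difference of a polynomial of degree `< n`
  have hΔ := congr_fun (fwdDiff_iter_sum_mul_pow_eq_zero (n := n) c) 0
  rw [fwdDiff_iter_eq_sum_shift] at hΔ
  calc _ = (-1) ^ n * ∑ k ∈ range (n + 1), ((-1 : ℤ) ^ (n - k) * n.choose k) •
        ∑ i ∈ range n, c i * ((0 : R) + k • (1 : R)) ^ i := by
        rw [mul_sum]
        refine sum_congr rfl fun k hk => ?_
        obtain ⟨j, rfl⟩ := Nat.exists_eq_add_of_le (Nat.lt_succ_iff.1 (mem_range.1 hk))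
        have hsign : (-1 : R) ^ k = (-1) ^ (k + j) * (-1) ^ j := by
          rw [pow_add, mul_assoc, ← pow_add, Even.neg_one_pow ⟨j, rfl⟩, mul_one]
        simp only [Nat.add_sub_cancel_left, zsmul_eq_mul, nsmul_eq_mul, zero_add, mul_one, hsign]
        push_cast
        ring
    _ = 0 := by rw [hΔ, Pi.zero_apply, mul_zero]

theorem sum_range_alternating_choose_mul_taylorWithinEval_eq_zero (f : ℝ → ℝ) (m : ℕ)
    (s : Set ℝ) (x₀ h : ℝ) :
    ∑ k ∈ range (m + 1 + 1),
      (-1) ^ k * ((m + 1).choose k : ℝ) * taylorWithinEval f m s x₀ (x₀ + k * h) = 0 := by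
  simp only [taylor_within_apply, add_sub_cancel_left, smul_eq_mul]
  rw [← sum_range_alternating_choose_mul_poly_eq_zero (m + 1)
    fun i => (i.factorial : ℝ)⁻¹ * h ^ i * iteratedDerivWithin i f s x₀]
  refine sum_congr rfl fun k _ => congrArg _ (sum_congr rfl fun i _ => ?_)
  ring

theorem abs_sum_alternating_choose_mul_le {n : ℕ} {u : ℕ → ℝ} {B : ℝ}
    (hu : ∀ k ≤ n, |u k| ≤ B) :
    |∑ k ∈ range (n + 1), (-1) ^ k * (n.choose k : ℝ) * u k| ≤ 2 ^ n * B := by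
  calc _ ≤ ∑ k ∈ range (n + 1), |(-1) ^ k * (n.choose k : ℝ) * u k| := abs_sum_le_sum_abs _ _
    _ ≤ ∑ k ∈ range (n + 1), (n.choose k : ℝ) * B := by
        refine sum_le_sum fun k hk => ?_
        rw [abs_mul, abs_mul, abs_pow, abs_neg, abs_one, one_pow, one_mul, Nat.abs_cast]
        exact mul_le_mul_of_nonneg_left (hu k (Nat.lt_succ_iff.1 (mem_range.1 hk)))
          (n.choose k).cast_nonneg
    _ = 2 ^ n * B := by rw [← sum_mul, ← Nat.cast_sum, Nat.sum_range_choose, Nat.cast_pow,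
          Nat.cast_ofNat]

theorem pow_div_factorial_le_exp_div_sqrt {n : ℕ} (hn : n ≠ 0) :
    (n : ℝ) ^ n / n.factorial ≤ exp 1 ^ n / √(2 * π * n) := by
  have hstirling := Stirling.le_factorial_stirling n
  rw [div_pow, mul_div_assoc', div_le_iff₀ (by positivity)] at hstirling
  rw [div_le_div_iff₀ (by positivity) (by positivity)]
  linarith

open Set Real in
/-- Lemma 1 of the paper:
`|(𝒥 - 𝒯_h)^n φ(θ)| ≤ (M / √(2πn)) (2 h b e)^n`. -/
theorem blend_lemma_one
    (n : ℕ) (hn : 1 ≤ n) (h : ℝ) (hh : 0 < h) (M b : ℝ) (hM : 0 ≤ M) (hb : 0 < b)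
    (θ : ℝ) (φ : ℝ → ℝ)
    (hC : ContDiffOn ℝ (n - 1 : ℕ) φ (Icc θ (θ + n * h)))
    (hD : DifferentiableOn ℝ
      (iteratedDerivWithin (n - 1) φ (Icc θ (θ + n * h))) (Ioo θ (θ + n * h)))
    (hbound : ∀ ξ ∈ Ioo θ (θ + n * h),
      |iteratedDerivWithin n φ (Icc θ (θ + n * h)) ξ| ≤ M * b ^ n) :
    |∑ k ∈ Finset.range (n + 1),
        (-1 : ℝ) ^ k * (n.choose k : ℝ) * φ (θ + k * h)| ≤
      M / Real.sqrt (2 * π * n) * (2 * h * b * exp 1) ^ n := by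
  set S := Icc θ (θ + n * h)
  set T := taylorWithinEval φ (n - 1) S θ
  have htaylor : ∑ k ∈ range (n + 1), (-1) ^ k * (n.choose k : ℝ) * T (θ + k * h) = 0 := by
    have := sum_range_alternating_choose_mul_taylorWithinEval_eq_zero φ (n - 1) S θ h
    rwa [Nat.sub_add_cancel hn] at this
  have hremainder : ∀ k ≤ n,
      |φ (θ + k * h) - T (θ + k * h)| ≤ M * b ^ n * (n * h) ^ n / n.factorial := by
    intro k hk
    have hkn : (k : ℝ) ≤ n := by exact_mod_cast hk
    have hmem : θ + k * h ∈ S := ⟨by nlinarith, by nlinarith⟩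
    have hlagrange := abs_sub_taylorWithinEval_Icc_le hmem hC hD
      (by rwa [Nat.sub_add_cancel hn])
    rw [Nat.sub_add_cancel hn, add_sub_cancel_left] at hlagrange
    exact hlagrange.trans (by gcongr)
  calc _ = |∑ k ∈ range (n + 1),
        (-1) ^ k * (n.choose k : ℝ) * (φ (θ + k * h) - T (θ + k * h))| := by
        simp only [mul_sub, sum_sub_distrib, htaylor, sub_zero]
    _ ≤ 2 ^ n * (M * b ^ n * (n * h) ^ n / n.factorial) :=
        abs_sum_alternating_choose_mul_le hremainder
    _ = M * (2 * h * b) ^ n * ((n : ℝ) ^ n / n.factorial) := by ring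
    _ ≤ M * (2 * h * b) ^ n * (exp 1 ^ n / √(2 * π * n)) := by
        gcongr M * (2 * h * b) ^ n * ?_
        exact pow_div_factorial_le_exp_div_sqrt (Nat.one_le_iff_ne_zero.1 hn)
    _ = _ := by ring
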